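/- Fix n and a nonnegative demand matrix W. For 1 ≤ l ≤ r ≤ n, let OSSLNU(l,r,W) denote the minimum total cost contributed by the vertices of [l,r] in the unbounded OSSLN problem, assuming all vertices of [l,r] have heights strictly below those of the vertices adjacent to the interval. Then OSSLNU(l,r,W) = min_{x∈[l,r]} ( OSSLNU(l,x−1,W) + OSSLNU(x+1,r,W) + Σ_{u<x} Σ_{v∈[x,r]} W(u,v) + Σ_{u∈[l,x)} Σ_{v>r} W(u,v) ), where the chosen pivot x is the unique vertex of maximum height in [l,r], all vertices of [l,x−1] and [x+1,r] receive heights strictly below h(x), and the contribution of the pivot x is Σ_{u<x} Σ_{v∈[x,r]} W(u,v) + Σ_{u∈[l,x)} Σ_{v>r} W(u,v). -/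
import Mathlib


open scoped Classical

namespace OSSLN

/-- `L(x, F)`: the smallest vertex `i ∈ [1, x]` such that all heights on `[i, x]` are at most
`F x`. -/
noncomputable def Lgen {α : Type*} [LinearOrder α] (F : ℕ → α) (x : ℕ) : ℕ :=
  sInf {i : ℕ | 1 ≤ i ∧ i ≤ x ∧ ∀ j, i ≤ j → j ≤ x → F j ≤ F x}

/-- `R(x, F)`: the largest vertex `i ∈ [x, n]` such that all heights on `[x, i]` are at most
`F x`. -/
noncomputable def Rgen {α : Type*} [LinearOrder α] (n : ℕ) (F : ℕ → α) (x : ℕ) : ℕ :=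
  sSup {i : ℕ | x ≤ i ∧ i ≤ n ∧ ∀ j, x ≤ j → j ≤ i → F j ≤ F x}

/-- Contribution of vertex `x` to the total cost:
`∑_{u<x} ∑_{v∈[x,R(x)]} W u v + ∑_{u∈[L(x),x)} ∑_{v>R(x)} W u v`. -/
noncomputable def contrib {α : Type*} [LinearOrder α] (n : ℕ) (W : ℕ → ℕ → ℝ)
    (F : ℕ → α) (x : ℕ) : ℝ :=
  (∑ u ∈ Finset.Icc 1 (x - 1), ∑ v ∈ Finset.Icc x (Rgen n F x), W u v) +
    ∑ u ∈ Finset.Icc (Lgen F x) (x - 1), ∑ v ∈ Finset.Icc (Rgen n F x + 1) n, W u v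

/-- `OSSLNU(l, r, W)`: the minimum total cost contributed by the vertices of `[l, r]` in the
unbounded OSSLN problem, the vertices adjacent to the interval being treated as having heights
strictly above all heights inside the interval (`⊤`). -/
noncomputable def osslnU (n l r : ℕ) (W : ℕ → ℕ → ℝ) : ℝ :=
  sInf { c : ℝ | ∃ f : ℕ → ℕ, (∀ j, l ≤ j → j ≤ r → 1 ≤ f j) ∧
    c = ∑ x ∈ Finset.Icc l r,
      contrib n W (fun j => if l ≤ j ∧ j ≤ r then (f j : ℕ∞) else ⊤) x }

/-! ### Auxiliary material -/

/-- The clamped height function: `f` on `[l, r]`, `⊤` outside. -/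
noncomputable def clamp (l r : ℕ) (f : ℕ → ℕ) : ℕ → ℕ∞ :=
  fun j => if l ≤ j ∧ j ≤ r then (f j : ℕ∞) else ⊤

lemma clamp_of_mem {l r j : ℕ} (f : ℕ → ℕ) (h1 : l ≤ j) (h2 : j ≤ r) :
    clamp l r f j = (f j : ℕ∞) := if_pos ⟨h1, h2⟩

lemma clamp_of_not_mem {l r j : ℕ} (f : ℕ → ℕ) (h : ¬ (l ≤ j ∧ j ≤ r)) :
    clamp l r f j = ⊤ := if_neg h

lemma osslnU_eq (n l r : ℕ) (W : ℕ → ℕ → ℝ) :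
    osslnU n l r W = sInf { c : ℝ | ∃ f : ℕ → ℕ, (∀ j, l ≤ j → j ≤ r → 1 ≤ f j) ∧
      c = ∑ x ∈ Finset.Icc l r, contrib n W (clamp l r f) x } := rfl

lemma Lgen_eq {F : ℕ → ℕ∞} {l x : ℕ} (h1 : 1 ≤ l) (hlx : l ≤ x)
    (htop : F (l - 1) = ⊤) (hfin : F x ≠ ⊤)
    (hle : ∀ j, l ≤ j → j ≤ x → F j ≤ F x) : Lgen F x = l := by
  have hmem : l ∈ {i : ℕ | 1 ≤ i ∧ i ≤ x ∧ ∀ j, i ≤ j → j ≤ x → F j ≤ F x} := ⟨h1, hlx, hle⟩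
  refine le_antisymm (Nat.sInf_le hmem) (le_csInf ⟨l, hmem⟩ ?_)
  rintro i ⟨hi1, hix, hi⟩
  by_contra hcon
  have h := hi (l - 1) (by omega) (by omega)
  rw [htop] at h
  exact hfin (top_le_iff.mp h)

lemma Rgen_eq {F : ℕ → ℕ∞} {n x r : ℕ} (hxr : x ≤ r) (hrn : r ≤ n)
    (htop : F (r + 1) = ⊤) (hfin : F x ≠ ⊤)
    (hle : ∀ j, x ≤ j → j ≤ r → F j ≤ F x) : Rgen n F x = r := by
  have hmem : r ∈ {i : ℕ | x ≤ i ∧ i ≤ n ∧ ∀ j, x ≤ j → j ≤ i → F j ≤ F x} := ⟨hxr, hrn, hle⟩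
  refine le_antisymm (csSup_le ⟨r, hmem⟩ ?_) (le_csSup ⟨n, fun i hi => hi.2.1⟩ hmem)
  rintro i ⟨hxi, hin, hi⟩
  by_contra hcon
  have h := hi (r + 1) (by omega) (by omega)
  rw [htop] at h
  exact hfin (top_le_iff.mp h)

lemma Lgen_congr' {F F' : ℕ → ℕ∞} {a x : ℕ} (h1 : 1 ≤ a) (hax : a ≤ x)
    (hag : ∀ j, a ≤ j → j ≤ x → F j = F' j)
    (hb : ¬ F (a - 1) ≤ F x) (hb' : ¬ F' (a - 1) ≤ F' x) :
    Lgen F x = Lgen F' x := by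
  have hset : {i : ℕ | 1 ≤ i ∧ i ≤ x ∧ ∀ j, i ≤ j → j ≤ x → F j ≤ F x}
      = {i : ℕ | 1 ≤ i ∧ i ≤ x ∧ ∀ j, i ≤ j → j ≤ x → F' j ≤ F' x} := by
    ext i
    simp only [Set.mem_setOf_eq]
    constructor
    · rintro ⟨hi1, hix, hi⟩
      have hia : a ≤ i := by
        by_contra hcon
        exact hb (hi (a - 1) (by omega) (by omega))
      exact ⟨hi1, hix, fun j hj1 hj2 => by
        rw [← hag j (by omega) hj2, ← hag x hax le_rfl]; exact hi j hj1 hj2⟩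
    · rintro ⟨hi1, hix, hi⟩
      have hia : a ≤ i := by
        by_contra hcon
        exact hb' (hi (a - 1) (by omega) (by omega))
      exact ⟨hi1, hix, fun j hj1 hj2 => by
        rw [hag j (by omega) hj2, hag x hax le_rfl]; exact hi j hj1 hj2⟩
  unfold Lgen
  rw [hset]

lemma Rgen_congr' {F F' : ℕ → ℕ∞} {n x b : ℕ} (hxb : x ≤ b)
    (hag : ∀ j, x ≤ j → j ≤ b → F j = F' j)
    (hb : ¬ F (b + 1) ≤ F x) (hb' : ¬ F' (b + 1) ≤ F' x) :
    Rgen n F x = Rgen n F' x := by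
  have hset : {i : ℕ | x ≤ i ∧ i ≤ n ∧ ∀ j, x ≤ j → j ≤ i → F j ≤ F x}
      = {i : ℕ | x ≤ i ∧ i ≤ n ∧ ∀ j, x ≤ j → j ≤ i → F' j ≤ F' x} := by
    ext i
    simp only [Set.mem_setOf_eq]
    constructor
    · rintro ⟨hxi, hin, hi⟩
      have hib : i ≤ b := by
        by_contra hcon
        exact hb (hi (b + 1) (by omega) (by omega))
      exact ⟨hxi, hin, fun j hj1 hj2 => by
        rw [← hag j hj1 (by omega), ← hag x le_rfl hxb]; exact hi j hj1 hj2⟩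
    · rintro ⟨hxi, hin, hi⟩
      have hib : i ≤ b := by
        by_contra hcon
        exact hb' (hi (b + 1) (by omega) (by omega))
      exact ⟨hxi, hin, fun j hj1 hj2 => by
        rw [hag j hj1 (by omega), hag x le_rfl hxb]; exact hi j hj1 hj2⟩
  unfold Rgen
  rw [hset]

lemma Lgen_le {F F' : ℕ → ℕ∞} {a x : ℕ} (h1 : 1 ≤ a) (hax : a ≤ x)
    (hag : ∀ j, a ≤ j → j ≤ x → F j = F' j)
    (hb' : ¬ F' (a - 1) ≤ F' x) : Lgen F x ≤ Lgen F' x := by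
  have hne : x ∈ {i : ℕ | 1 ≤ i ∧ i ≤ x ∧ ∀ j, i ≤ j → j ≤ x → F' j ≤ F' x} :=
    ⟨by omega, le_rfl, fun j hj1 hj2 => by
      have : j = x := le_antisymm hj2 hj1
      rw [this]⟩
  have hmem : Lgen F' x ∈ {i : ℕ | 1 ≤ i ∧ i ≤ x ∧ ∀ j, i ≤ j → j ≤ x → F' j ≤ F' x} := by
    unfold Lgen
    exact Nat.sInf_mem ⟨x, hne⟩
  obtain ⟨h1', hx', h'⟩ := hmem
  have hia : a ≤ Lgen F' x := by
    by_contra hcon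
    exact hb' (h' (a - 1) (by omega) (by omega))
  apply Nat.sInf_le
  exact ⟨h1', hx', fun j hj1 hj2 => by
    rw [hag j (by omega) hj2, hag x hax le_rfl]; exact h' j hj1 hj2⟩

lemma contrib_nonneg {n : ℕ} {W : ℕ → ℕ → ℝ} (hW : ∀ u v, 0 ≤ W u v)
    (F : ℕ → ℕ∞) (x : ℕ) : 0 ≤ contrib n W F x :=
  add_nonneg (Finset.sum_nonneg fun _ _ => Finset.sum_nonneg fun _ _ => hW _ _)
    (Finset.sum_nonneg fun _ _ => Finset.sum_nonneg fun _ _ => hW _ _)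

lemma costSet_nonempty (n l r : ℕ) (W : ℕ → ℕ → ℝ) :
    { c : ℝ | ∃ f : ℕ → ℕ, (∀ j, l ≤ j → j ≤ r → 1 ≤ f j) ∧
      c = ∑ x ∈ Finset.Icc l r, contrib n W (clamp l r f) x }.Nonempty :=
  ⟨_, fun _ => 1, fun _ _ _ => le_rfl, rfl⟩

lemma costSet_bddBelow (n l r : ℕ) (W : ℕ → ℕ → ℝ) (hW : ∀ u v, 0 ≤ W u v) :
    BddBelow { c : ℝ | ∃ f : ℕ → ℕ, (∀ j, l ≤ j → j ≤ r → 1 ≤ f j) ∧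
      c = ∑ x ∈ Finset.Icc l r, contrib n W (clamp l r f) x } := by
  refine ⟨0, ?_⟩
  rintro c ⟨f, hf, rfl⟩
  exact Finset.sum_nonneg fun x _ => contrib_nonneg hW _ _

lemma osslnU_le (n l r : ℕ) (W : ℕ → ℕ → ℝ) (hW : ∀ u v, 0 ≤ W u v)
    (f : ℕ → ℕ) (hf : ∀ j, l ≤ j → j ≤ r → 1 ≤ f j) :
    osslnU n l r W ≤ ∑ x ∈ Finset.Icc l r, contrib n W (clamp l r f) x := by
  rw [osslnU_eq]
  exact csInf_le (costSet_bddBelow n l r W hW) ⟨f, hf, rfl⟩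

lemma exists_approx (n l r : ℕ) (W : ℕ → ℕ → ℝ) {ε : ℝ} (hε : 0 < ε) :
    ∃ f : ℕ → ℕ, (∀ j, l ≤ j → j ≤ r → 1 ≤ f j) ∧
      ∑ x ∈ Finset.Icc l r, contrib n W (clamp l r f) x ≤ osslnU n l r W + ε := by
  have h := exists_lt_of_csInf_lt (costSet_nonempty n l r W)
    (show sInf _ < osslnU n l r W + ε by rw [osslnU_eq]; linarith)
  obtain ⟨c, ⟨f, hf, rfl⟩, hlt⟩ := h
  exact ⟨f, hf, le_of_lt hlt⟩

lemma contrib_pivot {n l r x : ℕ} (W : ℕ → ℕ → ℝ) (f : ℕ → ℕ)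
    (h1l : 1 ≤ l) (hlx : l ≤ x) (hxr : x ≤ r) (hrn : r ≤ n)
    (hmax : ∀ j, l ≤ j → j ≤ r → f j ≤ f x) :
    contrib n W (clamp l r f) x =
      (∑ u ∈ Finset.Icc 1 (x - 1), ∑ v ∈ Finset.Icc x r, W u v) +
        ∑ u ∈ Finset.Icc l (x - 1), ∑ v ∈ Finset.Icc (r + 1) n, W u v := by
  have hL : Lgen (clamp l r f) x = l := by
    refine Lgen_eq h1l hlx (clamp_of_not_mem f (by omega)) ?_ ?_
    · rw [clamp_of_mem f hlx hxr]; simp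
    · intro j hj1 hj2
      rw [clamp_of_mem f hj1 (by omega), clamp_of_mem f hlx hxr]
      exact_mod_cast hmax j hj1 (by omega)
  have hR : Rgen n (clamp l r f) x = r := by
    refine Rgen_eq hxr hrn (clamp_of_not_mem f (by omega)) ?_ ?_
    · rw [clamp_of_mem f hlx hxr]; simp
    · intro j hj1 hj2
      rw [clamp_of_mem f (by omega) hj2, clamp_of_mem f hlx hxr]
      exact_mod_cast hmax j (by omega) hj2
  unfold contrib
  rw [hL, hR]

lemma contrib_left_eq {n l r x y : ℕ} (W : ℕ → ℕ → ℝ) (f : ℕ → ℕ)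
    (h1l : 1 ≤ l) (hlx : l ≤ x) (hxr : x ≤ r)
    (hly : l ≤ y) (hyx : y < x)
    (hmax : ∀ j, l ≤ j → j < x → f j < f x) :
    contrib n W (clamp l r f) y = contrib n W (clamp l (x - 1) f) y := by
  have hx1 : x - 1 + 1 = x := by omega
  have hL : Lgen (clamp l r f) y = Lgen (clamp l (x - 1) f) y := by
    refine Lgen_congr' h1l hly ?_ ?_ ?_
    · intro j hj1 hj2
      rw [clamp_of_mem f hj1 (by omega), clamp_of_mem f hj1 (by omega)]
    · rw [clamp_of_not_mem f (by omega), clamp_of_mem f hly (by omega)]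
      simp
    · rw [clamp_of_not_mem f (by omega), clamp_of_mem f hly (by omega)]
      simp
  have hR : Rgen n (clamp l r f) y = Rgen n (clamp l (x - 1) f) y := by
    refine Rgen_congr' (b := x - 1) (by omega) ?_ ?_ ?_
    · intro j hj1 hj2
      rw [clamp_of_mem f (by omega) (by omega), clamp_of_mem f (by omega) (by omega)]
    · rw [hx1, clamp_of_mem f hlx hxr, clamp_of_mem f hly (by omega)]
      have := hmax y hly hyx
      simp only [not_le]
      exact_mod_cast this
    · rw [hx1, clamp_of_not_mem f (by omega), clamp_of_mem f hly (by omega)]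
      simp
  unfold contrib
  rw [hL, hR]

lemma contrib_right_eq {n l r x y : ℕ} (W : ℕ → ℕ → ℝ) (f : ℕ → ℕ)
    (hlx : l ≤ x) (hxr : x ≤ r) (hxy : x < y) (hyr : y ≤ r)
    (hmax : ∀ j, x < j → j ≤ r → f j < f x) :
    contrib n W (clamp l r f) y = contrib n W (clamp (x + 1) r f) y := by
  have hx1 : x + 1 - 1 = x := by omega
  have hL : Lgen (clamp l r f) y = Lgen (clamp (x + 1) r f) y := by
    refine Lgen_congr' (a := x + 1) (by omega) (by omega) ?_ ?_ ?_
    · intro j hj1 hj2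
      rw [clamp_of_mem f (by omega) (by omega), clamp_of_mem f (by omega) (by omega)]
    · rw [hx1, clamp_of_mem f hlx hxr, clamp_of_mem f (by omega) hyr]
      have := hmax y hxy hyr
      simp only [not_le]
      exact_mod_cast this
    · rw [hx1, clamp_of_not_mem f (by omega), clamp_of_mem f (by omega) hyr]
      simp
  have hR : Rgen n (clamp l r f) y = Rgen n (clamp (x + 1) r f) y := by
    refine Rgen_congr' (b := r) hyr ?_ ?_ ?_
    · intro j hj1 hj2
      rw [clamp_of_mem f (by omega) hj2, clamp_of_mem f (by omega) hj2]
    · rw [clamp_of_not_mem f (by omega), clamp_of_mem f (by omega) hyr]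
      simp
    · rw [clamp_of_not_mem f (by omega), clamp_of_mem f (by omega) hyr]
      simp
  unfold contrib
  rw [hL, hR]

lemma contrib_right_le {n l r x y : ℕ} {W : ℕ → ℕ → ℝ} (hW : ∀ u v, 0 ≤ W u v) (f : ℕ → ℕ)
    (hlx : l ≤ x) (hxy : x < y) (hyr : y ≤ r) :
    contrib n W (clamp (x + 1) r f) y ≤ contrib n W (clamp l r f) y := by
  have hx1 : x + 1 - 1 = x := by omega
  have hR : Rgen n (clamp l r f) y = Rgen n (clamp (x + 1) r f) y := by
    refine Rgen_congr' (b := r) hyr ?_ ?_ ?_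
    · intro j hj1 hj2
      rw [clamp_of_mem f (by omega) hj2, clamp_of_mem f (by omega) hj2]
    · rw [clamp_of_not_mem f (by omega), clamp_of_mem f (by omega) hyr]
      simp
    · rw [clamp_of_not_mem f (by omega), clamp_of_mem f (by omega) hyr]
      simp
  have hL : Lgen (clamp l r f) y ≤ Lgen (clamp (x + 1) r f) y := by
    refine Lgen_le (a := x + 1) (by omega) (by omega) ?_ ?_
    · intro j hj1 hj2
      rw [clamp_of_mem f (by omega) (by omega), clamp_of_mem f (by omega) (by omega)]
    · rw [hx1, clamp_of_not_mem f (by omega), clamp_of_mem f (by omega) hyr]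
      simp
  unfold contrib
  rw [hR]
  refine add_le_add le_rfl ?_
  refine Finset.sum_le_sum_of_subset_of_nonneg (Finset.Icc_subset_Icc hL le_rfl) ?_
  intro u _ _
  exact Finset.sum_nonneg fun v _ => hW u v

lemma sum_split (g : ℕ → ℝ) (l r x : ℕ) (h1 : 1 ≤ x) (hlx : l ≤ x) (hxr : x ≤ r) :
    ∑ y ∈ Finset.Icc l r, g y =
      (∑ y ∈ Finset.Icc l (x - 1), g y) + g x + ∑ y ∈ Finset.Icc (x + 1) r, g y := by
  have h2 : Finset.Icc l r = (Finset.Icc l (x - 1) ∪ {x}) ∪ Finset.Icc (x + 1) r := by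
    ext j
    simp only [Finset.mem_Icc, Finset.mem_union, Finset.mem_singleton]
    omega
  have d1 : Disjoint (Finset.Icc l (x - 1)) ({x} : Finset ℕ) := by
    simp only [Finset.disjoint_left, Finset.mem_Icc, Finset.mem_singleton]
    omega
  have d2 : Disjoint (Finset.Icc l (x - 1) ∪ {x}) (Finset.Icc (x + 1) r) := by
    simp only [Finset.disjoint_left, Finset.mem_Icc, Finset.mem_union, Finset.mem_singleton]
    omega
  rw [h2, Finset.sum_union d2, Finset.sum_union d1, Finset.sum_singleton]

lemma exists_leftmost_max (l r : ℕ) (hlr : l ≤ r) (f : ℕ → ℕ) :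
    ∃ x ∈ Finset.Icc l r, (∀ j ∈ Finset.Icc l r, f j ≤ f x) ∧
      ∀ j ∈ Finset.Icc l r, j < x → f j < f x := by
  obtain ⟨x0, hx0, hmax⟩ := Finset.exists_max_image (Finset.Icc l r) f (Finset.nonempty_Icc.mpr hlr)
  set s := (Finset.Icc l r).filter (fun j => ∀ k ∈ Finset.Icc l r, f k ≤ f j) with hs
  have hne : s.Nonempty := ⟨x0, Finset.mem_filter.mpr ⟨hx0, hmax⟩⟩
  have hmem := Finset.mem_filter.mp (s.min'_mem hne)
  refine ⟨s.min' hne, hmem.1, hmem.2, ?_⟩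
  intro j hj hjlt
  rcases lt_or_eq_of_le (hmem.2 j hj) with h | h
  · exact h
  · exfalso
    have hjs : j ∈ s := Finset.mem_filter.mpr ⟨hj, fun k hk => h ▸ hmem.2 k hk⟩
    exact absurd (s.min'_le j hjs) (by omega)

/-- Dynamic-programming recurrence for the unbounded OSSLN problem: the optimal cost of an
interval `[l, r]` is obtained by choosing the pivot `x` (the unique vertex of maximum height,
all other vertices of the interval getting strictly lower heights), whose contribution is
`∑_{u<x} ∑_{v∈[x,r]} W u v + ∑_{u∈[l,x)} ∑_{v>r} W u v`, and solving the two subintervals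
independently. -/
theorem osslnU_recurrence
    (n : ℕ) (W : ℕ → ℕ → ℝ) (hW : ∀ u v, 0 ≤ W u v)
    (l r : ℕ) (hl : 1 ≤ l) (hlr : l ≤ r) (hrn : r ≤ n) :
    osslnU n l r W =
      (Finset.Icc l r).inf' (Finset.nonempty_Icc.mpr hlr) (fun x =>
        osslnU n l (x - 1) W + osslnU n (x + 1) r W +
          (∑ u ∈ Finset.Icc 1 (x - 1), ∑ v ∈ Finset.Icc x r, W u v) +
          ∑ u ∈ Finset.Icc l (x - 1), ∑ v ∈ Finset.Icc (r + 1) n, W u v) := by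
  apply le_antisymm
  · -- osslnU ≤ inf'
    apply Finset.le_inf'
    intro x hx
    rw [Finset.mem_Icc] at hx
    obtain ⟨hlx, hxr⟩ := hx
    apply le_of_forall_pos_le_add
    intro ε hε
    obtain ⟨f₁, hf₁, hc₁⟩ := exists_approx n l (x - 1) W (half_pos hε)
    obtain ⟨f₂, hf₂, hc₂⟩ := exists_approx n (x + 1) r W (half_pos hε)
    set M : ℕ := (Finset.Icc l r).sup (fun j => if j < x then f₁ j else f₂ j) with hM
    set g : ℕ → ℕ := fun j => if j < x then f₁ j else if j = x then M + 1 else f₂ j with hg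
    have hg1 : ∀ j, l ≤ j → j ≤ r → 1 ≤ g j := by
      intro j hj1 hj2
      simp only [hg]
      split_ifs with h1 h2
      · exact hf₁ j hj1 (by omega)
      · omega
      · exact hf₂ j (by omega) hj2
    have hgx : g x = M + 1 := by simp [hg]
    have hgle : ∀ j, l ≤ j → j ≤ r → j ≠ x → g j < g x := by
      intro j hj1 hj2 hjx
      have hmem : j ∈ Finset.Icc l r := Finset.mem_Icc.mpr ⟨hj1, hj2⟩
      have hsup := Finset.le_sup (f := fun j => if j < x then f₁ j else f₂ j) hmem
      rw [← hM] at hsup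
      have hgj : g j = if j < x then f₁ j else f₂ j := by
        simp only [hg]
        by_cases h1 : j < x
        · simp [h1]
        · simp [h1, hjx]
      have hle : g j ≤ M := by rw [hgj]; exact hsup
      rw [hgx]
      omega
    have hgmax : ∀ j, l ≤ j → j ≤ r → g j ≤ g x := by
      intro j hj1 hj2
      by_cases hjx : j = x
      · rw [hjx]
      · exact le_of_lt (hgle j hj1 hj2 hjx)
    -- the restricted clamps agree
    have hcl1 : clamp l (x - 1) g = clamp l (x - 1) f₁ := by
      funext j
      by_cases h : l ≤ j ∧ j ≤ x - 1
      · rw [clamp_of_mem g h.1 h.2, clamp_of_mem f₁ h.1 h.2]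
        simp only [hg]
        rw [if_pos (by omega)]
      · rw [clamp_of_not_mem g h, clamp_of_not_mem f₁ h]
    have hcl2 : clamp (x + 1) r g = clamp (x + 1) r f₂ := by
      funext j
      by_cases h : x + 1 ≤ j ∧ j ≤ r
      · rw [clamp_of_mem g h.1 h.2, clamp_of_mem f₂ h.1 h.2]
        simp only [hg]
        rw [if_neg (by omega), if_neg (by omega)]
      · rw [clamp_of_not_mem g h, clamp_of_not_mem f₂ h]
    have hsplit := sum_split (fun y => contrib n W (clamp l r g) y) l r x (by omega) hlx hxr
    beta_reduce at hsplit
    have htot : osslnU n l r W ≤ ∑ y ∈ Finset.Icc l r, contrib n W (clamp l r g) y :=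
      osslnU_le n l r W hW g hg1
    have hleft : ∑ y ∈ Finset.Icc l (x - 1), contrib n W (clamp l r g) y
        = ∑ y ∈ Finset.Icc l (x - 1), contrib n W (clamp l (x - 1) f₁) y := by
      rw [← hcl1]
      apply Finset.sum_congr rfl
      intro y hy
      rw [Finset.mem_Icc] at hy
      exact contrib_left_eq W g hl hlx hxr hy.1 (by omega)
        (fun j hj1 hj2 => hgle j hj1 (by omega) (by omega))
    have hright : ∑ y ∈ Finset.Icc (x + 1) r, contrib n W (clamp l r g) y
        = ∑ y ∈ Finset.Icc (x + 1) r, contrib n W (clamp (x + 1) r f₂) y := by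
      rw [← hcl2]
      apply Finset.sum_congr rfl
      intro y hy
      rw [Finset.mem_Icc] at hy
      exact contrib_right_eq W g hlx hxr (by omega) hy.2
        (fun j hj1 hj2 => hgle j (by omega) hj2 (by omega))
    have hpiv : contrib n W (clamp l r g) x =
        (∑ u ∈ Finset.Icc 1 (x - 1), ∑ v ∈ Finset.Icc x r, W u v) +
          ∑ u ∈ Finset.Icc l (x - 1), ∑ v ∈ Finset.Icc (r + 1) n, W u v :=
      contrib_pivot W g hl hlx hxr hrn hgmax
    calc osslnU n l r W ≤ ∑ y ∈ Finset.Icc l r, contrib n W (clamp l r g) y := htot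
      _ = (∑ y ∈ Finset.Icc l (x - 1), contrib n W (clamp l (x - 1) f₁) y)
            + ((∑ u ∈ Finset.Icc 1 (x - 1), ∑ v ∈ Finset.Icc x r, W u v) +
              ∑ u ∈ Finset.Icc l (x - 1), ∑ v ∈ Finset.Icc (r + 1) n, W u v)
            + ∑ y ∈ Finset.Icc (x + 1) r, contrib n W (clamp (x + 1) r f₂) y := by
          rw [hsplit, hleft, hright, hpiv]
      _ ≤ (osslnU n l (x - 1) W + ε / 2)
            + ((∑ u ∈ Finset.Icc 1 (x - 1), ∑ v ∈ Finset.Icc x r, W u v) +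
              ∑ u ∈ Finset.Icc l (x - 1), ∑ v ∈ Finset.Icc (r + 1) n, W u v)
            + (osslnU n (x + 1) r W + ε / 2) := by
          exact add_le_add (add_le_add hc₁ le_rfl) hc₂
      _ = osslnU n l (x - 1) W + osslnU n (x + 1) r W +
            (∑ u ∈ Finset.Icc 1 (x - 1), ∑ v ∈ Finset.Icc x r, W u v) +
            (∑ u ∈ Finset.Icc l (x - 1), ∑ v ∈ Finset.Icc (r + 1) n, W u v) + ε := by
          ring
  · -- inf' ≤ osslnU
    rw [osslnU_eq]
    apply le_csInf (costSet_nonempty n l r W)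
    rintro c ⟨f, hf, rfl⟩
    obtain ⟨x, hxmem, hmax, hstrict⟩ := exists_leftmost_max l r hlr f
    rw [Finset.mem_Icc] at hxmem
    obtain ⟨hlx, hxr⟩ := hxmem
    have hsplit := sum_split (fun y => contrib n W (clamp l r f) y) l r x (by omega) hlx hxr
    beta_reduce at hsplit
    have hleft : ∑ y ∈ Finset.Icc l (x - 1), contrib n W (clamp l r f) y
        = ∑ y ∈ Finset.Icc l (x - 1), contrib n W (clamp l (x - 1) f) y := by
      apply Finset.sum_congr rfl
      intro y hy
      rw [Finset.mem_Icc] at hy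
      exact contrib_left_eq W f hl hlx hxr hy.1 (by omega)
        (fun j hj1 hj2 => hstrict j (Finset.mem_Icc.mpr ⟨hj1, by omega⟩) hj2)
    have hright : ∀ y ∈ Finset.Icc (x + 1) r,
        contrib n W (clamp (x + 1) r f) y ≤ contrib n W (clamp l r f) y := by
      intro y hy
      rw [Finset.mem_Icc] at hy
      exact contrib_right_le hW f hlx (by omega) hy.2
    have hpiv : contrib n W (clamp l r f) x =
        (∑ u ∈ Finset.Icc 1 (x - 1), ∑ v ∈ Finset.Icc x r, W u v) +
          ∑ u ∈ Finset.Icc l (x - 1), ∑ v ∈ Finset.Icc (r + 1) n, W u v :=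
      contrib_pivot W f hl hlx hxr hrn
        (fun j hj1 hj2 => hmax j (Finset.mem_Icc.mpr ⟨hj1, hj2⟩))
    have h1 : osslnU n l (x - 1) W ≤
        ∑ y ∈ Finset.Icc l (x - 1), contrib n W (clamp l (x - 1) f) y :=
      osslnU_le n l (x - 1) W hW f (fun j hj1 hj2 => hf j hj1 (by omega))
    have h2 : osslnU n (x + 1) r W ≤
        ∑ y ∈ Finset.Icc (x + 1) r, contrib n W (clamp (x + 1) r f) y :=
      osslnU_le n (x + 1) r W hW f (fun j hj1 hj2 => hf j (by omega) hj2)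
    have hinf : (Finset.Icc l r).inf' (Finset.nonempty_Icc.mpr hlr) (fun x =>
        osslnU n l (x - 1) W + osslnU n (x + 1) r W +
          (∑ u ∈ Finset.Icc 1 (x - 1), ∑ v ∈ Finset.Icc x r, W u v) +
          ∑ u ∈ Finset.Icc l (x - 1), ∑ v ∈ Finset.Icc (r + 1) n, W u v)
        ≤ osslnU n l (x - 1) W + osslnU n (x + 1) r W +
          (∑ u ∈ Finset.Icc 1 (x - 1), ∑ v ∈ Finset.Icc x r, W u v) +
          ∑ u ∈ Finset.Icc l (x - 1), ∑ v ∈ Finset.Icc (r + 1) n, W u v :=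
      Finset.inf'_le _ (Finset.mem_Icc.mpr ⟨hlx, hxr⟩)
    refine le_trans hinf ?_
    rw [hsplit, hpiv]
    have h2' : osslnU n (x + 1) r W ≤
        ∑ y ∈ Finset.Icc (x + 1) r, contrib n W (clamp l r f) y :=
      le_trans h2 (Finset.sum_le_sum hright)
    have h1' : osslnU n l (x - 1) W ≤
        ∑ y ∈ Finset.Icc l (x - 1), contrib n W (clamp l r f) y := by
      rw [hleft]; exact h1
    linarith

end OSSLN
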